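/- For every Laurent polynomial f ∈ K[z, z⁻¹] that is symmetric under z ↦ z⁻¹, one has the operator identity (1−q²)·D′(z·f) + q²·D((z+z⁻¹)·f) − q·(z+z⁻¹)·D f = (1−q)·[(e₁ − e₃) − (1 − abcd)·(z+z⁻¹)]·f in K(z). -/

import Mathlib

noncomputable section

variable {K : Type*} [Field K]

/-- `f ∈ K(z)` is a Laurent polynomial, i.e. lies in `K[z, z⁻¹] ⊆ K(z)`. -/
def IsLaurent (f : RatFunc K) : Prop :=
  ∃ (p : Polynomial K) (m : ℕ),
    f * RatFunc.X ^ m = algebraMap (Polynomial K) (RatFunc K) p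

/-- The rational function `A(z)`. -/
def Afun (a b c d q : K) : RatFunc K :=
  (1 - RatFunc.C a * RatFunc.X) * (1 - RatFunc.C b * RatFunc.X) *
      (1 - RatFunc.C c * RatFunc.X) * (1 - RatFunc.C d * RatFunc.X) /
    ((1 - RatFunc.X ^ 2) * (1 - RatFunc.C q * RatFunc.X ^ 2))

/-- The rational function `A(z⁻¹)`, obtained from `A(z)` by substituting `z⁻¹` for `z`. -/
def AfunInv (a b c d q : K) : RatFunc K :=
  (1 - RatFunc.C a * RatFunc.X⁻¹) * (1 - RatFunc.C b * RatFunc.X⁻¹) *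
      (1 - RatFunc.C c * RatFunc.X⁻¹) * (1 - RatFunc.C d * RatFunc.X⁻¹) /
    ((1 - RatFunc.X⁻¹ ^ 2) * (1 - RatFunc.C q * RatFunc.X⁻¹ ^ 2))

/-- The Askey–Wilson operator `D = A(z)(T_q - 1) + A(z⁻¹)(T_{q⁻¹} - 1)`. -/
def Dop (a b c d q : K) (Tq Tqi : RatFunc K → RatFunc K) (f : RatFunc K) : RatFunc K :=
  Afun a b c d q * (Tq f - f) + AfunInv a b c d q * (Tqi f - f)

/-- The modified Askey–Wilson operator `D' = A(z)(T_q - s₁) + A(z⁻¹)(T_{q⁻¹} s₁ - 1)`. -/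
def DopM (a b c d q : K) (Tq Tqi s1 : RatFunc K → RatFunc K) (f : RatFunc K) : RatFunc K :=
  Afun a b c d q * (Tq f - s1 f) + AfunInv a b c d q * (Tqi (s1 f) - f)

lemma aux_quad_ne (q : K) (hq0 : q ≠ 0) :
    (1 : RatFunc K) - RatFunc.C q * RatFunc.X ^ 2 ≠ 0 := by
  intro h
  have h2 : (RatFunc.C q * RatFunc.X ^ 2 - 1 : RatFunc K) = 0 := by linear_combination -h
  rw [show (RatFunc.C q * RatFunc.X ^ 2 - 1 : RatFunc K)
      = algebraMap (Polynomial K) (RatFunc K) (Polynomial.C q * Polynomial.X ^ 2 - 1) by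
    simp [RatFunc.algebraMap_C, RatFunc.algebraMap_X, map_sub, map_mul, map_pow, map_one]] at h2
  have h3 := (IsFractionRing.to_map_eq_zero_iff (K := RatFunc K)).mp h2
  have h4 := congrArg (fun p => Polynomial.coeff p 2) h3
  simp [Polynomial.coeff_one] at h4
  exact hq0 h4

lemma aux_pow_sub_C_ne (q : K) : (RatFunc.X : RatFunc K) ^ 2 - RatFunc.C q ≠ 0 := by
  intro h
  have h2 : (RatFunc.X ^ 2 - RatFunc.C q : RatFunc K)
      = algebraMap (Polynomial K) (RatFunc K) (Polynomial.X ^ 2 - Polynomial.C q) := by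
    simp [RatFunc.algebraMap_C, RatFunc.algebraMap_X, map_sub, map_pow]
  rw [h2] at h
  exact Polynomial.X_pow_sub_C_ne_zero two_pos q ((IsFractionRing.to_map_eq_zero_iff (K := RatFunc K)).mp h)

lemma aux_quad_ne' (q : K) :
    (1 : RatFunc K) - RatFunc.C q * RatFunc.X⁻¹ ^ 2 ≠ 0 := by
  have hX : (RatFunc.X : RatFunc K) ≠ 0 := RatFunc.X_ne_zero
  intro h
  rw [inv_pow, sub_eq_zero, eq_comm, mul_inv_eq_one₀ (pow_ne_zero 2 hX)] at h
  exact aux_pow_sub_C_ne q (by rw [← h, sub_self])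

lemma aux_one_sub_sq (K : Type*) [Field K] : (1 : RatFunc K) - RatFunc.X ^ 2 ≠ 0 := by
  have := aux_quad_ne (K := K) 1 one_ne_zero
  simpa using this

lemma aux_one_sub_sq' (K : Type*) [Field K] : (1 : RatFunc K) - RatFunc.X⁻¹ ^ 2 ≠ 0 := by
  have := aux_quad_ne' (K := K) 1
  simpa using this

set_option maxHeartbeats 1000000 in
lemma AfunInv_eq (a b c d q : K)
    (h1' : (1 : RatFunc K) - RatFunc.X⁻¹ ^ 2 ≠ 0)
    (h2' : (1 : RatFunc K) - RatFunc.C q * RatFunc.X⁻¹ ^ 2 ≠ 0)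
    (hd1 : (RatFunc.X : RatFunc K) ^ 2 - 1 ≠ 0)
    (hd2 : (RatFunc.X : RatFunc K) ^ 2 - RatFunc.C q ≠ 0) :
    AfunInv a b c d q =
      (RatFunc.X - RatFunc.C a) * (RatFunc.X - RatFunc.C b) * (RatFunc.X - RatFunc.C c) *
          (RatFunc.X - RatFunc.C d) /
        ((RatFunc.X ^ 2 - 1) * (RatFunc.X ^ 2 - RatFunc.C q)) := by
  have hX : (RatFunc.X : RatFunc K) ≠ 0 := RatFunc.X_ne_zero
  rw [AfunInv, div_eq_div_iff (mul_ne_zero h1' h2') (mul_ne_zero hd1 hd2)]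
  field_simp

set_option maxHeartbeats 2000000 in
lemma keyid (a b c d q : K)
    (h1 : (1 : RatFunc K) - RatFunc.X ^ 2 ≠ 0)
    (h2 : (1 : RatFunc K) - RatFunc.C q * RatFunc.X ^ 2 ≠ 0)
    (hd1 : (RatFunc.X : RatFunc K) ^ 2 - 1 ≠ 0)
    (hd2 : (RatFunc.X : RatFunc K) ^ 2 - RatFunc.C q ≠ 0) :
    ((1 - RatFunc.C a * RatFunc.X) * (1 - RatFunc.C b * RatFunc.X) *
      (1 - RatFunc.C c * RatFunc.X) * (1 - RatFunc.C d * RatFunc.X) /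
    ((1 - RatFunc.X ^ 2) * (1 - RatFunc.C q * RatFunc.X ^ 2)))
      * (RatFunc.C q * RatFunc.X - RatFunc.X⁻¹) +
    ((RatFunc.X - RatFunc.C a) * (RatFunc.X - RatFunc.C b) * (RatFunc.X - RatFunc.C c) *
          (RatFunc.X - RatFunc.C d) /
        ((RatFunc.X ^ 2 - 1) * (RatFunc.X ^ 2 - RatFunc.C q)))
      * (RatFunc.C q * RatFunc.X⁻¹ - RatFunc.X) =
    ((RatFunc.C a + RatFunc.C b + RatFunc.C c + RatFunc.C d)
        - (RatFunc.C a * RatFunc.C b * RatFunc.C c + RatFunc.C a * RatFunc.C b * RatFunc.C d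
          + RatFunc.C a * RatFunc.C c * RatFunc.C d + RatFunc.C b * RatFunc.C c * RatFunc.C d))
      - (1 - RatFunc.C a * RatFunc.C b * RatFunc.C c * RatFunc.C d)
          * (RatFunc.X + RatFunc.X⁻¹) := by
  have hX : (RatFunc.X : RatFunc K) ≠ 0 := RatFunc.X_ne_zero
  have h2c : (1 : RatFunc K) - RatFunc.X ^ 2 * RatFunc.C q ≠ 0 := by rwa [mul_comm]
  field_simp
  ring

set_option maxHeartbeats 2000000 in
/-- Identity relating `D` and `D'` on symmetric Laurent polynomials:
`(1-q²) D'(z f) + q² D((z+z⁻¹) f) - q (z+z⁻¹) D f = (1-q)[(e₁-e₃) - (1-abcd)(z+z⁻¹)] f`. -/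
theorem D_Dprime_relation [CharZero K] (a b c d q : K)
    (hq0 : q ≠ 0) (hq1 : ∀ k : ℕ, k ≠ 0 → q ^ k ≠ 1)
    (Tq Tqi s₁ : RatFunc K ≃ₐ[K] RatFunc K)
    (hTq : Tq RatFunc.X = RatFunc.C q * RatFunc.X)
    (hTqi : Tqi RatFunc.X = RatFunc.C q⁻¹ * RatFunc.X)
    (hs₁ : s₁ RatFunc.X = RatFunc.X⁻¹) :
    ∀ f : RatFunc K, IsLaurent f → s₁ f = f →
      RatFunc.C (1 - q ^ 2) * DopM a b c d q Tq Tqi s₁ (RatFunc.X * f) +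
          RatFunc.C (q ^ 2) * Dop a b c d q Tq Tqi ((RatFunc.X + RatFunc.X⁻¹) * f) -
          RatFunc.C q * ((RatFunc.X + RatFunc.X⁻¹) * Dop a b c d q Tq Tqi f) =
        RatFunc.C (1 - q) *
          ((RatFunc.C ((a + b + c + d) - (a * b * c + a * b * d + a * c * d + b * c * d)) -
              RatFunc.C (1 - a * b * c * d) * (RatFunc.X + RatFunc.X⁻¹)) * f) := by
  intro f _ hsym
  have hX : (RatFunc.X : RatFunc K) ≠ 0 := RatFunc.X_ne_zero
  have hq : (RatFunc.C q : RatFunc K) ≠ 0 := by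
    simpa using (map_ne_zero (RatFunc.C (K := K))).mpr hq0
  have h1 : (1 : RatFunc K) - RatFunc.X ^ 2 ≠ 0 := aux_one_sub_sq K
  have h2 : (1 : RatFunc K) - RatFunc.C q * RatFunc.X ^ 2 ≠ 0 := aux_quad_ne q hq0
  have h1' : (1 : RatFunc K) - RatFunc.X⁻¹ ^ 2 ≠ 0 := aux_one_sub_sq' K
  have h2' : (1 : RatFunc K) - RatFunc.C q * RatFunc.X⁻¹ ^ 2 ≠ 0 := aux_quad_ne' q
  have hd1 : (RatFunc.X : RatFunc K) ^ 2 - 1 ≠ 0 := fun h => h1 (by linear_combination -h)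
  have hd2 : (RatFunc.X : RatFunc K) ^ 2 - RatFunc.C q ≠ 0 := aux_pow_sub_C_ne q
  have hCqi : (RatFunc.C q⁻¹ : RatFunc K) = (RatFunc.C q)⁻¹ := map_inv₀ _ _
  have hTqXi : Tq (RatFunc.X⁻¹ : RatFunc K) = (RatFunc.C q)⁻¹ * RatFunc.X⁻¹ := by
    rw [map_inv₀, hTq, mul_inv]
  have hTqiXi : Tqi (RatFunc.X⁻¹ : RatFunc K) = RatFunc.C q * RatFunc.X⁻¹ := by
    rw [map_inv₀, hTqi, mul_inv, hCqi, inv_inv]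
  have e1 : Tq (RatFunc.X * f) = RatFunc.C q * RatFunc.X * Tq f := by
    rw [map_mul, hTq]
  have e2 : s₁ (RatFunc.X * f) = RatFunc.X⁻¹ * f := by
    rw [map_mul, hs₁, hsym]
  have e3 : Tqi (RatFunc.X⁻¹ * f) = RatFunc.C q * RatFunc.X⁻¹ * Tqi f := by
    rw [map_mul, hTqiXi]
  have e4 : Tq ((RatFunc.X + RatFunc.X⁻¹) * f)
      = (RatFunc.C q * RatFunc.X + (RatFunc.C q)⁻¹ * RatFunc.X⁻¹) * Tq f := by
    rw [map_mul, map_add, hTq, hTqXi]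
  have e5 : Tqi ((RatFunc.X + RatFunc.X⁻¹) * f)
      = ((RatFunc.C q)⁻¹ * RatFunc.X + RatFunc.C q * RatFunc.X⁻¹) * Tqi f := by
    rw [map_mul, map_add, hTqi, hTqiXi, hCqi]
  have key := keyid a b c d q h1 h2 hd1 hd2
  have hg : (1 - RatFunc.C q ^ 2) * (RatFunc.C q * RatFunc.X)
      + RatFunc.C q ^ 2 * (RatFunc.C q * RatFunc.X + (RatFunc.C q)⁻¹ * RatFunc.X⁻¹)
      - RatFunc.C q * (RatFunc.X + RatFunc.X⁻¹) = 0 := by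
    field_simp
    ring
  have hh : (1 - RatFunc.C q ^ 2) * (RatFunc.C q * RatFunc.X⁻¹)
      + RatFunc.C q ^ 2 * ((RatFunc.C q)⁻¹ * RatFunc.X + RatFunc.C q * RatFunc.X⁻¹)
      - RatFunc.C q * (RatFunc.X + RatFunc.X⁻¹) = 0 := by
    field_simp
    ring
  rw [DopM, Dop, Dop, AfunInv_eq a b c d q h1' h2' hd1 hd2, Afun,
    e1, e2, e3, e4, e5,
    show RatFunc.C (1 - q ^ 2) = 1 - RatFunc.C q ^ 2 by simp [map_sub, map_pow],
    show RatFunc.C (q ^ 2) = RatFunc.C q ^ 2 by simp [map_pow],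
    show RatFunc.C ((a + b + c + d) - (a * b * c + a * b * d + a * c * d + b * c * d))
      = (RatFunc.C a + RatFunc.C b + RatFunc.C c + RatFunc.C d)
        - (RatFunc.C a * RatFunc.C b * RatFunc.C c + RatFunc.C a * RatFunc.C b * RatFunc.C d
          + RatFunc.C a * RatFunc.C c * RatFunc.C d + RatFunc.C b * RatFunc.C c * RatFunc.C d) by
      simp [map_sub, map_add, map_mul],
    show RatFunc.C (1 - a * b * c * d)
      = 1 - RatFunc.C a * RatFunc.C b * RatFunc.C c * RatFunc.C d by simp [map_sub, map_mul],
    show RatFunc.C (1 - q) = 1 - RatFunc.C q by simp [map_sub]]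
  linear_combination
    ((1 - RatFunc.C a * RatFunc.X) * (1 - RatFunc.C b * RatFunc.X) *
        (1 - RatFunc.C c * RatFunc.X) * (1 - RatFunc.C d * RatFunc.X) /
      ((1 - RatFunc.X ^ 2) * (1 - RatFunc.C q * RatFunc.X ^ 2)) * Tq f) * hg +
    ((RatFunc.X - RatFunc.C a) * (RatFunc.X - RatFunc.C b) * (RatFunc.X - RatFunc.C c) *
        (RatFunc.X - RatFunc.C d) /
      ((RatFunc.X ^ 2 - 1) * (RatFunc.X ^ 2 - RatFunc.C q)) * Tqi f) * hh +
    ((1 - RatFunc.C q) * f) * key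

end
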